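/- arXiv:2401.01426 — 2 statements merged into one kernel-verified Lean document; each statement's English description precedes it below -/
import Mathlib

section
/- Let G be an ADMG with c-components 𝒞 = {C_1,…,C_t}, and let H be a node of an H-graph for G, i.e., H is a union of c-components {C_i}_{i∈T} for some T ⊆ [t]. Then for any SCM inducing G, the c-factor of H satisfies P_{Pa(H)}(H) = ∏_{i∈T} P_{Pa(C_i)}(C_i), where Pa(H) denotes the observed parents of H outside H. -/
open Classical

noncomputable section

/-- An acyclic directed mixed graph (ADMG): directed edges (causal) and
bidirected edges (latent confounders). -/
structure ADMG (V : Type) where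
  dir : V → V → Prop
  bidir : V → V → Prop
  bidir_symm : ∀ a b, bidir a b → bidir b a
  acyclic : ∀ v, ¬ Relation.TransGen dir v v

namespace ADMG

variable {V : Type} [Fintype V] [DecidableEq V]

/-- Observed parents of a set `W`, outside `W`. -/
def parents (G : ADMG V) (W : Set V) : Set V :=
  {v | v ∉ W ∧ ∃ w ∈ W, G.dir v w}

/-- Observed parents of a finite set `W`, outside `W`. -/
def parentsF (G : ADMG V) (W : Finset V) : Finset V :=
  Finset.univ.filter fun v => v ∉ W ∧ ∃ w ∈ W, G.dir v w

/-- Ancestors of a set `W` (including `W` itself). -/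
def ancestors (G : ADMG V) (W : Set V) : Set V :=
  {v | ∃ w ∈ W, Relation.ReflTransGen G.dir v w}

/-- Ancestors of a finite set `W` (including `W` itself). -/
def ancestorsF (G : ADMG V) (W : Finset V) : Finset V :=
  Finset.univ.filter fun v => ∃ w ∈ W, Relation.ReflTransGen G.dir v w

/-- Bidirected connectivity (paths of bidirected edges). -/
def biConn (G : ADMG V) (a b : V) : Prop :=
  Relation.ReflTransGen G.bidir a b

/-- `C` is a c-component of `G`: a maximal bidirected-connected set. -/
def isCComponent (G : ADMG V) (C : Set V) : Prop :=
  C.Nonempty ∧ (∀ a ∈ C, ∀ b ∈ C, G.biConn a b) ∧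
    ∀ a ∈ C, ∀ b, G.biConn a b → b ∈ C

/-- The set of c-components of `G`. -/
def cComponents (G : ADMG V) : Set (Set V) := {C | G.isCComponent C}

/-- The graph after `do(I)`: incoming directed edges into `I` and bidirected
edges incident to `I` are removed. -/
def doGraph (G : ADMG V) (I : Set V) : ADMG V where
  dir a b := G.dir a b ∧ b ∉ I
  bidir a b := G.bidir a b ∧ a ∉ I ∧ b ∉ I
  bidir_symm := fun a b h => ⟨G.bidir_symm a b h.1, h.2.2, h.2.1⟩
  acyclic := fun v h => G.acyclic v (Relation.TransGen.mono (fun _ _ hx => hx.1) _ _ h)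

/-- The graph with all outgoing directed edges of `X` removed. -/
def underGraph (G : ADMG V) (X : Set V) : ADMG V where
  dir a b := G.dir a b ∧ a ∉ X
  bidir := G.bidir
  bidir_symm := G.bidir_symm
  acyclic := fun v h => G.acyclic v (Relation.TransGen.mono (fun _ _ hx => hx.1) _ _ h)

/-- The induced sub-graph on a vertex set `S`. -/
def induced (G : ADMG V) (S : Set V) : ADMG V where
  dir a b := G.dir a b ∧ a ∈ S ∧ b ∈ S
  bidir a b := G.bidir a b ∧ a ∈ S ∧ b ∈ S
  bidir_symm := fun a b h => ⟨G.bidir_symm a b h.1, h.2.2, h.2.1⟩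
  acyclic := fun v h => G.acyclic v (Relation.TransGen.mono (fun _ _ hx => hx.1) _ _ h)

/-- Adjacency in the mixed graph. -/
def adjacent (G : ADMG V) (a b : V) : Prop := G.dir a b ∨ G.dir b a ∨ G.bidir a b

/-- The edge between `a` and `b` points into `b`. -/
def intoEdge (G : ADMG V) (a b : V) : Prop := G.dir a b ∨ G.bidir a b

/-- `b` is a collider on the consecutive triple `a, b, c`. -/
def isCollider (G : ADMG V) (a b c : V) : Prop := G.intoEdge a b ∧ G.intoEdge c b

/-- A walk (list of vertices) that is active given the conditioning set `Z`:
non-colliders avoid `Z`, colliders have a descendant in `Z`. -/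
def ActiveWalk (G : ADMG V) (Z : Set V) (p : List V) : Prop :=
  p.Chain' G.adjacent ∧
    ∀ i a b c, p[i]? = some a → p[i + 1]? = some b → p[i + 2]? = some c →
      (G.isCollider a b c → ∃ z ∈ Z, Relation.ReflTransGen G.dir b z) ∧
      (¬ G.isCollider a b c → b ∉ Z)

/-- d-connection of `X` and `Y` given `Z` in the mixed graph (m-connection). -/
def dConnected (G : ADMG V) (X Y Z : Set V) : Prop :=
  ∃ p : List V, G.ActiveWalk Z p ∧
    (∃ x ∈ X, p.head? = some x) ∧ ∃ y ∈ Y, p.getLast? = some y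

/-- d-separation of `X` and `Y` given `Z`. -/
def dSeparated (G : ADMG V) (X Y Z : Set V) : Prop := ¬ G.dConnected X Y Z

end ADMG

/-- A (semi-Markovian) structural causal model over the ADMG `G`, with observed
variables valued in `Val`: independent finite latents `L`, mechanisms `f`
reading only observed parents and own latents (shared latents forcing a
bidirected edge), and the solution map of the structural equations under an
intervention. -/
structure SCM (V : Type) (Val : Type) [Fintype V] [DecidableEq V] [Fintype Val]
    (G : ADMG V) where
  L : Type
  [fintL : Fintype L]
  [decL : DecidableEq L]
  NVal : Type
  [fintN : Fintype NVal]
  ν : L → NVal → ℝ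
  ν_nonneg : ∀ l x, 0 ≤ ν l x
  ν_sum : ∀ l, ∑ x, ν l x = 1
  reads : V → L → Prop
  semiMarkov : ∀ v w l, v ≠ w → reads v l → reads w l → G.bidir v w
  f : V → (V → Val) → (L → NVal) → Val
  f_parents : ∀ v x y ω, (∀ p, G.dir p v → x p = y p) → f v x ω = f v y ω
  f_latents : ∀ v x ω ω', (∀ l, reads v l → ω l = ω' l) → f v x ω = f v x ω'
  solve : Finset V → (V → Val) → (L → NVal) → V → Val
  solve_spec : ∀ I x ω v,
    solve I x ω v = if v ∈ I then x v else f v (solve I x ω) ω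

namespace SCM

attribute [instance] SCM.fintL SCM.decL SCM.fintN

variable {V Val : Type} [Fintype V] [DecidableEq V] [Fintype Val] {G : ADMG V}

/-- Probability of a full latent configuration (latents are independent). -/
def μ (M : SCM V Val G) (ω : M.L → M.NVal) : ℝ := ∏ l, M.ν l (ω l)

/-- The interventional distribution `P(y | do(I := x))` (observational for `I = ∅`). -/
def P (M : SCM V Val G) (I : Finset V) (x : V → Val) (y : V → Val) : ℝ :=
  ∑ ω : M.L → M.NVal, if M.solve I x ω = y then M.μ ω else 0

/-- The marginal interventional distribution `P(S = y|_S | do(I := x))`. -/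
def Pm (M : SCM V Val G) (I : Finset V) (x : V → Val) (S : Finset V) (y : V → Val) : ℝ :=
  ∑ z : V → Val, if ∀ v ∈ S, z v = y v then M.P I x z else 0

/-- The conditional distribution `P(S = y|_S | C = y|_C, do(I := x))`. -/
def cond (M : SCM V Val G) (I : Finset V) (x : V → Val) (S C : Finset V)
    (y : V → Val) : ℝ :=
  M.Pm I x (S ∪ C) y / M.Pm I x C y

/-- Strict positivity of the induced observational distribution. -/
def positive (M : SCM V Val G) : Prop := ∀ x y, 0 < M.P ∅ x y

end SCM

end

/-!
Under `do(Pa(S) := y)` the solution agrees with `y` on `S` exactly when every mechanism of `S`,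
fed with `y`, returns `y` (induction along the acyclic directed edges). So the c-factor of `S`
is the probability of an event that depends only on the latents read by `S`. The latents are
independent, and distinct c-components read disjoint sets of latents since a shared latent
forces a bidirected edge; hence for a union of c-components the probability factorizes.
-/

section ProductWeight

variable {ι N : Type*} [Fintype ι] (w : ι → N → ℝ)

lemma prod_weight_piecewise_mul_prod_weight_piecewise (s : Set ι) (ω ω' : ι → N) :
    (∏ l, w l (s.piecewise ω ω' l)) * ∏ l, w l (s.piecewise ω' ω l)
      = (∏ l, w l (ω l)) * ∏ l, w l (ω' l) := by
  rw [← Finset.prod_mul_distrib, ← Finset.prod_mul_distrib]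
  refine Finset.prod_congr rfl fun l _ => ?_
  by_cases hl : l ∈ s <;> simp [hl, mul_comm]

variable [DecidableEq ι] [Fintype N]

lemma sum_prod_weight_eq_one (hw : ∀ l, ∑ x, w l x = 1) :
    ∑ ω : ι → N, ∏ l, w l (ω l) = 1 := by
  rw [← Fintype.prod_sum]
  simp [hw]

lemma sum_prod_weight_mul_of_dependsOn (hw : ∀ l, ∑ x, w l x = 1) {s : Set ι}
    {A B : (ι → N) → ℝ} (hA : DependsOn A s) (hB : DependsOn B sᶜ) :
    ∑ ω, (∏ l, w l (ω l)) * (A ω * B ω)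
      = (∑ ω, (∏ l, w l (ω l)) * A ω) * ∑ ω, (∏ l, w l (ω l)) * B ω := by
  -- exchanging the `s`-coordinates of two configurations is a weight-preserving involution
  let swap : (ι → N) × (ι → N) ≃ (ι → N) × (ι → N) :=
    { toFun := fun q => (s.piecewise q.1 q.2, s.piecewise q.2 q.1)
      invFun := fun q => (s.piecewise q.1 q.2, s.piecewise q.2 q.1)
      left_inv := fun q => by ext l <;> by_cases hl : l ∈ s <;> simp [hl]
      right_inv := fun q => by ext l <;> by_cases hl : l ∈ s <;> simp [hl] }
  have hA' : ∀ ω ω' : ι → N, A (s.piecewise ω ω') = A ω := fun ω ω' =>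
    hA fun l hl => by simp [hl]
  have hB' : ∀ ω ω' : ι → N, B (s.piecewise ω' ω) = B ω := fun ω ω' =>
    hB fun l hl => by simp [Set.piecewise_eq_of_notMem _ _ _ hl]
  calc ∑ ω, (∏ l, w l (ω l)) * (A ω * B ω)
      = ∑ q : (ι → N) × (ι → N),
          (∏ l, w l (q.1 l)) * (∏ l, w l (q.2 l)) * (A q.1 * B q.1) := by
        simp_rw [Fintype.sum_prod_type, mul_right_comm _ (∏ l, w l _), ← Finset.mul_sum,
          sum_prod_weight_eq_one w hw, mul_one]
    _ = ∑ q : (ι → N) × (ι → N),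
          (∏ l, w l (q.1 l)) * A q.1 * ((∏ l, w l (q.2 l)) * B q.2) := by
        rw [← swap.sum_comp]
        refine Fintype.sum_congr _ _ fun q => ?_
        simp only [swap, Equiv.coe_fn_mk, hA', hB']
        rw [prod_weight_piecewise_mul_prod_weight_piecewise]
        ring
    _ = (∑ ω, (∏ l, w l (ω l)) * A ω) * ∑ ω, (∏ l, w l (ω l)) * B ω := by
        rw [Finset.sum_mul_sum, Fintype.sum_prod_type]

lemma sum_prod_weight_mul_prod_of_dependsOn (hw : ∀ l, ∑ x, w l x = 1) {κ : Type*}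
    (T : Finset κ) (A : κ → (ι → N) → ℝ) (s : κ → Set ι)
    (hA : ∀ i ∈ T, DependsOn (A i) (s i)) (hs : (T : Set κ).PairwiseDisjoint s) :
    ∑ ω, (∏ l, w l (ω l)) * ∏ i ∈ T, A i ω
      = ∏ i ∈ T, ∑ ω, (∏ l, w l (ω l)) * A i ω := by
  induction T using Finset.induction_on with
  | empty => simpa using sum_prod_weight_eq_one w hw
  | insert j T hj ih =>
    have hrest : DependsOn (fun ω => ∏ i ∈ T, A i ω) (s j)ᶜ := fun ω ω' h =>
      Finset.prod_congr rfl fun i hi => hA i (Finset.mem_insert_of_mem hi) fun l hl =>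
        h l ((hs (by simp [hi]) (by simp) (ne_of_mem_of_not_mem hi hj)).notMem_of_mem_left hl)
    simp_rw [Finset.prod_insert hj]
    rw [sum_prod_weight_mul_of_dependsOn w hw (hA j (Finset.mem_insert_self j T)) hrest,
      ih (fun i hi => hA i (Finset.mem_insert_of_mem hi)) (hs.subset (by simp))]

end ProductWeight

namespace ADMG

variable {V : Type} [Finite V]

lemma wellFounded_dir (G : ADMG V) : WellFounded G.dir :=
  have : IsTrans V (Relation.TransGen G.dir) := ⟨fun _ _ _ => Relation.TransGen.trans⟩
  have : Std.Irrefl (Relation.TransGen G.dir) := ⟨G.acyclic⟩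
  Subrelation.wf Relation.TransGen.single (Finite.wellFounded_of_trans_of_irrefl _)

end ADMG

namespace SCM

variable {V Val : Type} [Fintype V] [DecidableEq V] [Fintype Val] {G : ADMG V}
  (M : SCM V Val G)

def ReproducesOn (S : Finset V) (y : V → Val) (ω : M.L → M.NVal) : Prop :=
  ∀ v ∈ S, M.f v y ω = y v

def latents (S : Finset V) : Set M.L := {l | ∃ v ∈ S, M.reads v l}

lemma solve_parentsF_apply (S : Finset V) (y : V → Val) (ω : M.L → M.NVal) {v : V}
    (hv : v ∈ S) (hpa : ∀ p ∈ S, G.dir p v → M.solve (G.parentsF S) y ω p = y p) :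
    M.solve (G.parentsF S) y ω v = M.f v y ω := by
  have hvS : v ∉ G.parentsF S := fun h => (Finset.mem_filter.mp h).2.1 hv
  rw [M.solve_spec, if_neg hvS]
  refine M.f_parents v _ _ ω fun p hp => ?_
  by_cases hpS : p ∈ S
  · exact hpa p hpS hp
  · rw [M.solve_spec, if_pos (by simp [ADMG.parentsF, hpS]; exact ⟨v, hv, hp⟩)]

lemma solve_parentsF_eqOn_iff (S : Finset V) (y : V → Val) (ω : M.L → M.NVal) :
    (∀ v ∈ S, M.solve (G.parentsF S) y ω v = y v) ↔ M.ReproducesOn S y ω := by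
  refine ⟨fun h v hv => ?_, fun h v => ?_⟩
  · rw [← M.solve_parentsF_apply S y ω hv fun p hp _ => h p hp, h v hv]
  · induction v using G.wellFounded_dir.induction with
    | _ v ih =>
      exact fun hv =>
        (M.solve_parentsF_apply S y ω hv fun p hp hpv => ih p hpv hp).trans (h v hv)

lemma Pm_parentsF_self_eq_sum (S : Finset V) (y : V → Val) :
    M.Pm (G.parentsF S) y S y = ∑ ω, M.μ ω * if M.ReproducesOn S y ω then 1 else 0 := by
  simp only [Pm, P, mul_ite, mul_one, mul_zero, ← M.solve_parentsF_eqOn_iff]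
  rw [← Finset.sum_filter, Finset.sum_comm]
  refine Fintype.sum_congr _ _ fun ω => ?_
  rw [Finset.sum_ite_eq]
  simp

lemma dependsOn_reproducesOn (S : Finset V) (y : V → Val) :
    DependsOn (fun ω => if M.ReproducesOn S y ω then (1 : ℝ) else 0) (M.latents S) := by
  intro ω ω' h
  have hf : ∀ v ∈ S, M.f v y ω = M.f v y ω' := fun v hv =>
    M.f_latents v y ω ω' fun l hl => h l ⟨v, hv, hl⟩
  exact if_congr (forall₂_congr fun v hv => by rw [hf v hv]) rfl rfl

lemma disjoint_latents_of_isCComponent {C D : Finset V} (hC : G.isCComponent ↑C)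
    (hCD : Disjoint C D) : Disjoint (M.latents C) (M.latents D) := by
  refine Set.disjoint_left.mpr fun l ⟨v, hv, hvl⟩ ⟨w, hw, hwl⟩ => ?_
  have hwC : w ∈ C := by
    by_cases hvw : v = w
    · exact hvw ▸ hv
    · exact hC.2.2 v hv w (.single (M.semiMarkov v w l hvw hvl hwl))
  exact Finset.disjoint_left.mp hCD hwC hw

lemma reproducesOn_biUnion {κ : Type*} (T : Finset κ) (C : κ → Finset V) (y : V → Val)
    (ω : M.L → M.NVal) :
    M.ReproducesOn (T.biUnion C) y ω ↔ ∀ i ∈ T, M.ReproducesOn (C i) y ω :=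
  ⟨fun h i hi v hv => h v (Finset.mem_biUnion.2 ⟨i, hi, hv⟩), fun h v hv =>
    let ⟨i, hi, hvi⟩ := Finset.mem_biUnion.1 hv
    h i hi v hvi⟩

end SCM

theorem hnode_c_factor_eq_prod_c_factors_general
    {V Val : Type} [Fintype V] [DecidableEq V] [Fintype Val]
    (G : ADMG V) {n : ℕ} (C : Fin n → Finset V)
    (hcc : ∀ i, G.isCComponent ↑(C i))
    (hdisj : ∀ i j, i ≠ j → Disjoint (C i) (C j))
    (T : Finset (Fin n)) (H : Finset V) (hH : H = T.biUnion C)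
    (M : SCM V Val G) (y : V → Val) :
    M.Pm (G.parentsF H) y H y = ∏ i ∈ T, M.Pm (G.parentsF (C i)) y (C i) y := by
  subst hH
  have hind : ∀ ω, (if M.ReproducesOn (T.biUnion C) y ω then (1 : ℝ) else 0)
      = ∏ i ∈ T, if M.ReproducesOn (C i) y ω then 1 else 0 := fun ω => by
    rw [Finset.prod_boole]
    congr 1
    exact propext (M.reproducesOn_biUnion T C y ω)
  simp only [M.Pm_parentsF_self_eq_sum, hind]
  exact sum_prod_weight_mul_prod_of_dependsOn M.ν M.ν_sum T _ _
    (fun i _ => M.dependsOn_reproducesOn (C i) y)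
    fun i _ j _ hij => M.disjoint_latents_of_isCComponent (hcc i) (hdisj i j hij)

/-- the c-factor of an h-node `H` (a union of c-components
`{C_i}_{i ∈ T}`) factorizes as the product of the c-factors of its
c-components: `P_{Pa(H)}(H) = ∏_{i ∈ T} P_{Pa(C_i)}(C_i)`. -/
theorem hnode_c_factor_eq_prod_c_factors
    {V Val : Type} [Fintype V] [DecidableEq V] [Fintype Val]
    (G : ADMG V) {n : ℕ} (C : Fin n → Finset V)
    (hcc : ∀ i, G.isCComponent ↑(C i))
    (hdisj : ∀ i j, i ≠ j → Disjoint (C i) (C j))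
    (hcover : ∀ v : V, ∃ i, v ∈ C i)
    (T : Finset (Fin n)) (H : Finset V) (hH : H = T.biUnion C)
    (M : SCM V Val G) (y : V → Val) :
    M.Pm (G.parentsF H) y H y = ∏ i ∈ T, M.Pm (G.parentsF (C i)) y (C i) y :=
  hnode_c_factor_eq_prod_c_factors_general G C hcc hdisj T H hH M y
end

section
/- Let G be an ADMG with c-components {C_i}, and fix an intervention I contained in c-component C_j. Then for any strictly positive SCM inducing G, the interventional joint distribution factorizes as P_I(𝒱\I) = P_{Pa(C_j)∪I}(C_j \ I) · ∏_{i≠j} P_{Pa(C_i)}(C_i); in particular, the c-factors of all c-components not containing I coincide with the corresponding c-factors of the observational distribution P(𝒱). -/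
open Classical

/-!
Fix the observed values `y`. If every parent of a vertex of `S` lying outside `S` is intervened
on, then the solution of the structural equations agrees with `y` on `S` exactly when the
equations of `S` hold at `y` (by well-founded induction along the acyclic graph), and this event
only involves the latents read by `S`. So both sides are probabilities of latent events: the left
side for `S = 𝒱 \ I`, the factors for `S = C i \ I`. A latent read by two vertices forces a
bidirected edge between them, so distinct c-components read disjoint, hence independent, families
of latents, and the probability of the intersection factorizes. For `i ≠ j` we have
`C i \ I = C i`, which is why those factors are observational.
-/

section PiExpect

variable {L N : Type*} [Fintype L] [DecidableEq L] [Fintype N] (ν : L → N → ℝ)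

def piExpect (f : (L → N) → ℝ) : ℝ := ∑ ω, f ω * ∏ l, ν l (ω l)

variable {ν}

theorem sum_prod_eq_one_of_sum_eq_one (hν : ∀ l, ∑ x, ν l x = 1) :
    ∑ ω : L → N, ∏ l, ν l (ω l) = 1 := by
  rw [← Fintype.prod_sum, Finset.prod_eq_one fun l _ => hν l]

theorem piExpect_mul_of_dependsOn_compl (hν : ∀ l, ∑ x, ν l x = 1) {A : Set L}
    {g h : (L → N) → ℝ} (hg : DependsOn g A) (hh : DependsOn h Aᶜ) :
    piExpect ν (fun ω => g ω * h ω) = piExpect ν g * piExpect ν h := by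
  classical
  let w : (L → N) → ℝ := fun ω => ∏ l, ν l (ω l)
  -- Swapping the `A`-coordinates of a pair `(ω, ω')` is a weight-preserving involution, so the
  -- sums of `g ω * h ω * w ω * w ω'` and of `g ω * h ω' * w ω * w ω'` agree.
  let swap : (L → N) × (L → N) → (L → N) × (L → N) :=
    fun p => (A.piecewise p.1 p.2, A.piecewise p.2 p.1)
  have hswap : Function.Involutive swap := fun p => by
    refine Prod.ext (funext fun l => ?_) (funext fun l => ?_) <;>
      by_cases hl : l ∈ A <;> simp [swap, hl]
  have hw : ∀ p : (L → N) × (L → N), w (swap p).1 * w (swap p).2 = w p.1 * w p.2 := by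
    intro p
    simp only [w, swap, ← Finset.prod_mul_distrib]
    refine Finset.prod_congr rfl fun l _ => ?_
    by_cases hl : l ∈ A <;> simp [hl, mul_comm]
  let F : (L → N) × (L → N) → ℝ := fun p => g p.1 * h p.1 * (w p.1 * w p.2)
  calc piExpect ν (fun ω => g ω * h ω)
      = ∑ p, F p := by
        simp only [F, w, Fintype.sum_prod_type, ← mul_assoc, ← Finset.mul_sum,
          sum_prod_eq_one_of_sum_eq_one hν, mul_one]
        rfl
    _ = ∑ p, F (hswap.toPerm swap p) := (Equiv.sum_comp _ F).symm
    _ = ∑ p : (L → N) × (L → N), g p.1 * w p.1 * (h p.2 * w p.2) := by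
        refine Fintype.sum_congr _ _ fun p => ?_
        have hgp : g (swap p).1 = g p.1 := hg fun l hl => by simp [swap, hl]
        have hhp : h (swap p).1 = h p.2 := hh fun l hl => by
          simp [swap, Set.piecewise_eq_of_notMem _ _ _ hl]
        simp only [F, Function.Involutive.coe_toPerm, hgp, hhp, hw]
        ring
    _ = piExpect ν g * piExpect ν h := by
        rw [Fintype.sum_prod_type, piExpect, piExpect, Fintype.sum_mul_sum]

theorem piExpect_prod_of_dependsOn (hν : ∀ l, ∑ x, ν l x = 1) {ι : Type*} {A : ι → Set L}
    (hA : Pairwise fun i k => Disjoint (A i) (A k)) {g : ι → (L → N) → ℝ}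
    (hg : ∀ i, DependsOn (g i) (A i)) (s : Finset ι) :
    piExpect ν (fun ω => ∏ i ∈ s, g i ω) = ∏ i ∈ s, piExpect ν (g i) := by
  classical
  induction s using Finset.induction_on with
  | empty => simpa [piExpect] using sum_prod_eq_one_of_sum_eq_one hν
  | insert a s ha ih =>
    have hrest : DependsOn (fun ω => ∏ i ∈ s, g i ω) (A a)ᶜ := fun ω ω' hωω' =>
      Finset.prod_congr rfl fun i hi => hg i fun l hl =>
        hωω' l (Set.disjoint_left.mp (hA (ne_of_mem_of_not_mem hi ha)) hl)
    simp only [Finset.prod_insert ha]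
    rw [piExpect_mul_of_dependsOn_compl hν (hg a) hrest, ih]

end PiExpect

theorem ADMG.wellFounded_transGen_dir {V : Type} [Finite V] (G : ADMG V) :
    WellFounded (Relation.TransGen G.dir) :=
  haveI : IsTrans V (Relation.TransGen G.dir) := ⟨fun _ _ _ => Relation.TransGen.trans⟩
  haveI : Std.Irrefl (Relation.TransGen G.dir) := ⟨G.acyclic⟩
  Finite.wellFounded_of_trans_of_irrefl _

namespace SCM

variable {V Val : Type} [Fintype V] [DecidableEq V] [Fintype Val] {G : ADMG V}
  (M : SCM V Val G)

noncomputable def eqnIndicator (S : Finset V) (y : V → Val) (ω : M.L → M.NVal) : ℝ :=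
  if ∀ v ∈ S, M.f v y ω = y v then 1 else 0

def latentsOf (S : Finset V) : Set M.L := {l | ∃ v ∈ S, M.reads v l}

variable {M}

theorem solve_eq_f_of_parents {J : Finset V} {y : V → Val} {ω : M.L → M.NVal} {v : V}
    (hv : v ∉ J)
    (hpa : ∀ p, G.dir p v → p ∉ J → M.solve J y ω p = y p) :
    M.solve J y ω v = M.f v y ω := by
  rw [M.solve_spec, if_neg hv]
  refine M.f_parents v _ _ ω fun p hp => ?_
  by_cases hpJ : p ∈ J
  · rw [M.solve_spec, if_pos hpJ]
  · exact hpa p hp hpJ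

theorem solve_eq_on_iff {J S : Finset V} (hSJ : Disjoint S J)
    (hpa : ∀ v ∈ S, ∀ p, G.dir p v → p ∈ S ∪ J) (y : V → Val) (ω : M.L → M.NVal) :
    (∀ v ∈ S, M.solve J y ω v = y v) ↔ ∀ v ∈ S, M.f v y ω = y v := by
  have hpaS : ∀ v ∈ S, ∀ p, G.dir p v → p ∉ J → p ∈ S := fun v hv p hp hpJ =>
    (Finset.mem_union.mp (hpa v hv p hp)).resolve_right hpJ
  refine ⟨fun h v hv => ?_, fun h v => ?_⟩
  · rw [← solve_eq_f_of_parents (Finset.disjoint_left.mp hSJ hv) fun p hp hpJ =>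
      h p (hpaS v hv p hp hpJ), h v hv]
  · induction v using G.wellFounded_transGen_dir.induction with
    | _ v ih =>
      intro hv
      rw [solve_eq_f_of_parents (Finset.disjoint_left.mp hSJ hv) fun p hp hpJ =>
        ih p (.single hp) (hpaS v hv p hp hpJ), h v hv]

theorem Pm_eq_piExpect {J S : Finset V} (hSJ : Disjoint S J)
    (hpa : ∀ v ∈ S, ∀ p, G.dir p v → p ∈ S ∪ J) (y : V → Val) :
    M.Pm J y S y = piExpect M.ν (M.eqnIndicator S y) := by
  unfold Pm P
  rw [← Finset.sum_filter, Finset.sum_comm]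
  refine Fintype.sum_congr _ _ fun ω => ?_
  simp only [Finset.sum_ite_eq, Finset.mem_filter, Finset.mem_univ, true_and,
    solve_eq_on_iff hSJ hpa, eqnIndicator, ite_mul, one_mul, zero_mul]
  rfl

theorem Pm_parentsF_union_sdiff (C I : Finset V) (y : V → Val) :
    M.Pm (G.parentsF C ∪ I) y (C \ I) y = piExpect M.ν (M.eqnIndicator (C \ I) y) := by
  refine Pm_eq_piExpect ?_ (fun v hv p hp => ?_) y
  · refine Finset.disjoint_left.mpr fun v hv hvJ => ?_
    rw [Finset.mem_sdiff] at hv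
    simp only [Finset.mem_union, ADMG.parentsF, Finset.mem_filter] at hvJ
    tauto
  · have hvC : v ∈ C := (Finset.mem_sdiff.mp hv).1
    by_cases hpC : p ∈ C
    · by_cases hpI : p ∈ I <;> simp [hpC, hpI]
    · have hpPa : p ∈ G.parentsF C :=
        Finset.mem_filter.mpr ⟨Finset.mem_univ p, hpC, v, hvC, hp⟩
      simp [hpPa]

theorem eqnIndicator_biUnion {ι : Type*} (s : Finset ι) (T : ι → Finset V) (y : V → Val)
    (ω : M.L → M.NVal) :
    M.eqnIndicator (s.biUnion T) y ω = ∏ i ∈ s, M.eqnIndicator (T i) y ω := by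
  simp only [eqnIndicator, Finset.prod_boole, Finset.mem_biUnion]
  congr 1
  exact propext ⟨fun h i hi v hv => h v ⟨i, hi, hv⟩, fun h v ⟨i, hi, hv⟩ => h i hi v hv⟩

theorem dependsOn_eqnIndicator (S : Finset V) (y : V → Val) :
    DependsOn (M.eqnIndicator S y) (M.latentsOf S) := fun ω ω' h => by
  have hf : ∀ v ∈ S, M.f v y ω = M.f v y ω' := fun v hv =>
    M.f_latents v y ω ω' fun l hl => h l ⟨v, hv, hl⟩
  simp only [eqnIndicator]
  congr 1
  exact propext (forall₂_congr fun v hv => by rw [hf v hv])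

theorem disjoint_latentsOf {C S T : Finset V} (hC : G.isCComponent ↑C) (hS : S ⊆ C)
    (hT : Disjoint C T) : Disjoint (M.latentsOf S) (M.latentsOf T) := by
  refine Set.disjoint_left.mpr fun l ⟨v, hv, hvl⟩ ⟨w, hw, hwl⟩ => ?_
  have hvw : v ≠ w := fun h => Finset.disjoint_left.mp hT (hS hv) (h ▸ hw)
  have hwC : w ∈ C := hC.2.2 v (hS hv) w (.single (M.semiMarkov v w l hvw hvl hwl))
  exact Finset.disjoint_left.mp hT hwC hw

end SCM

theorem interventional_c_factorization_general
    {V Val : Type} [Fintype V] [DecidableEq V] [Fintype Val]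
    (G : ADMG V) {n : ℕ} (C : Fin n → Finset V)
    (hcc : ∀ i, G.isCComponent ↑(C i))
    (hdisj : ∀ i j, i ≠ j → Disjoint (C i) (C j))
    (hcover : ∀ v : V, ∃ i, v ∈ C i)
    (I : Finset V) (j : Fin n) (hIj : I ⊆ C j)
    (M : SCM V Val G) (y : V → Val) :
    M.Pm I y (Finset.univ \ I) y =
      M.Pm (G.parentsF (C j) ∪ I) y (C j \ I) y *
        ∏ i ∈ Finset.univ.erase j, M.Pm (G.parentsF (C i)) y (C i) y := by
  have hunion : Finset.univ \ I = Finset.univ.biUnion fun i => C i \ I := by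
    ext v
    obtain ⟨i, hi⟩ := hcover v
    simp only [Finset.mem_sdiff, Finset.mem_univ, true_and, Finset.mem_biUnion]
    exact ⟨fun hvI => ⟨i, hi, hvI⟩, fun ⟨_, _, hvI⟩ => hvI⟩
  have hlatents : Pairwise fun i k => Disjoint (M.latentsOf (C i \ I)) (M.latentsOf (C k \ I)) :=
    fun i k hik => SCM.disjoint_latentsOf (hcc i) Finset.sdiff_subset
      ((hdisj i k hik).mono_right Finset.sdiff_subset)
  have hobs : ∀ i ∈ Finset.univ.erase j,
      M.Pm (G.parentsF (C i)) y (C i) y = piExpect M.ν (M.eqnIndicator (C i \ I) y) := by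
    intro i hi
    rw [Finset.sdiff_eq_self_of_disjoint
      ((hdisj i j (Finset.ne_of_mem_erase hi)).mono_right hIj)]
    simpa using SCM.Pm_parentsF_union_sdiff (M := M) (C i) ∅ y
  calc M.Pm I y (Finset.univ \ I) y
      = piExpect M.ν (fun ω => ∏ i, M.eqnIndicator (C i \ I) y ω) := by
        rw [SCM.Pm_eq_piExpect Finset.sdiff_disjoint (fun _ _ p _ => by simp) y, hunion]
        exact congrArg _ (funext (SCM.eqnIndicator_biUnion _ _ y))
    _ = ∏ i, piExpect M.ν (M.eqnIndicator (C i \ I) y) :=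
        piExpect_prod_of_dependsOn M.ν_sum hlatents
          (fun i => SCM.dependsOn_eqnIndicator _ y) _
    _ = _ := by
        rw [← Finset.mul_prod_erase _ _ (Finset.mem_univ j), SCM.Pm_parentsF_union_sdiff,
          Finset.prod_congr rfl hobs]

/-- Tian's factorization of an interventional distribution: for an
intervention `I` contained in the c-component `C j`,
`P_I(𝒱 \ I) = P_{Pa(C j) ∪ I}(C j \ I) · ∏_{i ≠ j} P_{Pa(C i)}(C i)`; in
particular the c-factors of c-components not containing `I` coincide with the
observational c-factors. -/
theorem interventional_c_factorization
    {V Val : Type} [Fintype V] [DecidableEq V] [Fintype Val]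
    (G : ADMG V) {n : ℕ} (C : Fin n → Finset V)
    (hcc : ∀ i, G.isCComponent ↑(C i))
    (hdisj : ∀ i j, i ≠ j → Disjoint (C i) (C j))
    (hcover : ∀ v : V, ∃ i, v ∈ C i)
    (I : Finset V) (j : Fin n) (hIj : I ⊆ C j)
    (M : SCM V Val G) (hpos : M.positive) (y : V → Val) :
    M.Pm I y (Finset.univ \ I) y =
      M.Pm (G.parentsF (C j) ∪ I) y (C j \ I) y *
        ∏ i ∈ Finset.univ.erase j, M.Pm (G.parentsF (C i)) y (C i) y :=
  interventional_c_factorization_general G C hcc hdisj hcover I j hIj M y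
end
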